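/- arXiv:1610.05422 — 2 statements merged into one kernel-verified Lean document; each statement's English description precedes it below -/
import Mathlib

section
/- Let X be a path connected Polish space, x ∈ X, and n ∈ ℕ. Then the set N_n of loops l ∈ L_x whose path-homotopy class [l] ∈ π₁(X,x) has commutator length at most n (i.e., [l] is a product of at most n commutators) is an analytic subset of the loop space L_x. -/
open CategoryTheory
open scoped Cardinal unitInterval
open scoped commutatorElement

attribute [local instance] Path.Homotopic.setoid

/-- The path-homotopy class of a loop `l` based at `x`, as an element of the
fundamental group `π₁(X, x)`. -/
noncomputable def pathClass {X : Type u} [TopologicalSpace X] {x : X} (l : Path x x) :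
    FundamentalGroup X x :=
  FundamentalGroup.fromPath (⟦l⟧ : Path.Homotopic.Quotient x x)

/-!
Homotopy classes can be read off the loop space itself: two loops are homotopic rel endpoints
iff they are joined by a path in `Path x x`. So `l` has commutator length at most `n` iff `l` is
joined to the value of the continuous map `(a, b) ↦ ⁅a₀, b₀⁆ ⋯ ⁅aₙ₋₁, bₙ₋₁⁆` on `(Lₓ)ⁿ × (Lₓ)ⁿ`.
In a Polish space the relation "joined by a path" is analytic, being the image of the Polish
space `C(I, Lₓ)` under `γ ↦ (γ 0, γ 1)`; the set in question is a projection of a continuous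
preimage of it, hence analytic.
-/

instance ContinuousMap.polishSpace {K X : Type*} [MetricSpace K] [CompactSpace K]
    [TopologicalSpace X] [PolishSpace X] : PolishSpace C(K, X) := by
  let := TopologicalSpace.upgradeIsCompletelyMetrizable X
  infer_instance

namespace Path

variable {X : Type*} [TopologicalSpace X]

theorem isClosedEmbedding_coe [T2Space X] (x y : X) :
    Topology.IsClosedEmbedding ((↑) : Path x y → C(I, X)) := by
  refine ⟨⟨⟨rfl⟩, fun p q h => Path.ext (congrArg DFunLike.coe h :)⟩, ?_⟩
  have hrange : Set.range ((↑) : Path x y → C(I, X)) = {f | f 0 = x} ∩ {f | f 1 = y} := by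
    ext f
    constructor
    · rintro ⟨p, rfl⟩
      exact ⟨p.source, p.target⟩
    · rintro ⟨h0, h1⟩
      exact ⟨⟨f, h0, h1⟩, rfl⟩
  rw [hrange]
  exact (isClosed_eq (continuous_eval_const 0) continuous_const).inter
    (isClosed_eq (continuous_eval_const 1) continuous_const)

instance polishSpace [PolishSpace X] (x y : X) : PolishSpace (Path x y) := by
  let := TopologicalSpace.upgradeIsCompletelyMetrizable X
  exact (isClosedEmbedding_coe x y).polishSpace

theorem homotopic_iff_joined {x y : X} {p q : Path x y} : p.Homotopic q ↔ Joined p q := by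
  constructor
  · rintro ⟨F⟩
    exact ⟨{ toFun := F.eval
             continuous_toFun := continuous_uncurry_iff.1 F.continuous
             source' := F.eval_zero
             target' := F.eval_one }⟩
  · rintro ⟨γ⟩
    exact ⟨{ toFun := fun st => γ st.1 st.2
             continuous_toFun := continuous_uncurry_iff.2 γ.continuous
             map_zero_left := fun t => by simp
             map_one_left := fun t => by simp
             prop' := by
               rintro s t (rfl | rfl) <;> simp }⟩

end Path

theorem MeasureTheory.analyticSet_setOf_joined {P : Type*} [TopologicalSpace P] [PolishSpace P] :
    AnalyticSet {q : P × P | Joined q.1 q.2} := by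
  have hrange : {q : P × P | Joined q.1 q.2} = Set.range fun γ : C(I, P) => (γ 0, γ 1) := by
    ext ⟨a, b⟩
    constructor
    · rintro ⟨γ⟩
      exact ⟨γ, Prod.ext γ.source γ.target⟩
    · rintro ⟨γ, hγ⟩
      obtain ⟨rfl, rfl⟩ := Prod.ext_iff.1 hγ
      exact ⟨⟨γ, rfl, rfl⟩⟩
  rw [hrange]
  exact analyticSet_range_of_polishSpace
    ((continuous_eval_const 0).prodMk (continuous_eval_const 1))

section Loops

variable {X : Type u} [TopologicalSpace X] {x : X}

theorem pathClass_trans (a b : Path x x) : pathClass (a.trans b) = pathClass b * pathClass a :=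
  Path.Homotopic.Quotient.mk_trans a b

theorem pathClass_symm (a : Path x x) : pathClass a.symm = (pathClass a)⁻¹ := rfl

theorem pathClass_surjective : Function.Surjective (pathClass : Path x x → FundamentalGroup X x) :=
  fun f => Quotient.exists_rep (FundamentalGroup.toPath f)

theorem pathClass_eq_pathClass_iff_joined {l m : Path x x} :
    pathClass l = pathClass m ↔ Joined l m :=
  Quotient.eq.trans Path.homotopic_iff_joined

noncomputable def commutatorLoop (a b : Path x x) : Path x x :=
  ((b.symm.trans a.symm).trans b).trans a

theorem pathClass_commutatorLoop (a b : Path x x) :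
    pathClass (commutatorLoop a b) = ⁅pathClass a, pathClass b⁆ := by
  simp only [commutatorLoop, pathClass_trans, pathClass_symm, commutatorElement_def, mul_assoc]

theorem Continuous.commutatorLoop {Y : Type*} [TopologicalSpace Y] {f g : Y → Path x x}
    (hf : Continuous f) (hg : Continuous g) : Continuous fun y => commutatorLoop (f y) (g y) :=
  (((Path.continuous_symm.comp hg).path_trans (Path.continuous_symm.comp hf)).path_trans
    hg).path_trans hf

noncomputable def finProdLoop : ∀ {n : ℕ}, (Fin n → Path x x) → Path x x
  | 0, _ => Path.refl x
  | _ + 1, c => (finProdLoop fun i => c i.succ).trans (c 0)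

theorem pathClass_finProdLoop {n : ℕ} (c : Fin n → Path x x) :
    pathClass (finProdLoop c) = (List.ofFn fun i => pathClass (c i)).prod := by
  induction n with
  | zero => rfl
  | succ n ih => rw [finProdLoop, pathClass_trans, ih, List.ofFn_succ, List.prod_cons]

theorem continuous_finProdLoop (n : ℕ) : Continuous (finProdLoop : (Fin n → Path x x) → _) := by
  induction n with
  | zero => exact continuous_const
  | succ n ih =>
    exact (ih.comp (continuous_pi fun i => continuous_apply i.succ)).path_trans
      (continuous_apply 0)

noncomputable def commutatorProductLoop (n : ℕ) (p : (Fin n → Path x x) × (Fin n → Path x x)) :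
    Path x x :=
  finProdLoop fun i => commutatorLoop (p.1 i) (p.2 i)

theorem pathClass_commutatorProductLoop {n : ℕ} (p : (Fin n → Path x x) × (Fin n → Path x x)) :
    pathClass (commutatorProductLoop n p) =
      (List.ofFn fun i => ⁅pathClass (p.1 i), pathClass (p.2 i)⁆).prod := by
  simp only [commutatorProductLoop, pathClass_finProdLoop, pathClass_commutatorLoop]

theorem continuous_commutatorProductLoop (n : ℕ) :
    Continuous (commutatorProductLoop (x := x) n) :=
  (continuous_finProdLoop n).comp <| continuous_pi fun i =>
    (continuous_apply (A := fun _ : Fin n => Path x x) i).fst'.commutatorLoop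
      (continuous_apply (A := fun _ : Fin n => Path x x) i).snd'

theorem exists_pathClass_eq_prod_commutators_iff {n : ℕ} {l : Path x x} :
    (∃ f g : Fin n → FundamentalGroup X x, pathClass l = (List.ofFn fun i => ⁅f i, g i⁆).prod) ↔
      ∃ p, Joined l (commutatorProductLoop n p) := by
  simp only [← pathClass_eq_pathClass_iff_joined, pathClass_commutatorProductLoop]
  constructor
  · rintro ⟨f, g, hl⟩
    choose a ha using fun i => pathClass_surjective (f i)
    choose b hb using fun i => pathClass_surjective (g i)
    exact ⟨(a, b), by simpa only [ha, hb] using hl⟩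
  · rintro ⟨p, hp⟩
    exact ⟨_, _, hp⟩

end Loops

theorem stmt12_general (X : Type) [TopologicalSpace X] [PolishSpace X]
    (x : X) (n : ℕ) :
    MeasureTheory.AnalyticSet {l : Path x x | ∃ f g : Fin n → FundamentalGroup X x,
      pathClass l = (List.ofFn fun i => ⁅f i, g i⁆).prod} := by
  have hset : {l : Path x x | ∃ f g : Fin n → FundamentalGroup X x,
      pathClass l = (List.ofFn fun i => ⁅f i, g i⁆).prod} =
      Prod.fst '' (Prod.map id (commutatorProductLoop n) ⁻¹' {q | Joined q.1 q.2}) := by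
    ext l
    simp only [Set.mem_ofPred_eq, exists_pathClass_eq_prod_commutators_iff, Set.mem_image,
      Set.mem_preimage, Prod.exists, Prod.map_apply, id_eq, exists_and_right, exists_eq_right]
  rw [hset]
  exact (MeasureTheory.analyticSet_setOf_joined.preimage
    (continuous_id.prodMap (continuous_commutatorProductLoop n))).image_of_continuous continuous_fst

/-- For a path connected Polish space `X`, a basepoint `x` and `n : ℕ`,
the set of loops at `x` whose path-homotopy class is a product of at most `n` commutators
in `π₁(X,x)` is an analytic subset of the loop space. -/
theorem stmt12 (X : Type) [TopologicalSpace X] [PolishSpace X] [PathConnectedSpace X]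
    (x : X) (n : ℕ) :
    MeasureTheory.AnalyticSet {l : Path x x | ∃ f g : Fin n → FundamentalGroup X x,
      pathClass l = (List.ofFn fun i => ⁅f i, g i⁆).prod} :=
  stmt12_general X x n
end

section
/- For each n ∈ ℕ let (Xₙ, dₙ) be a path connected metric space with basepoint xₙ and diameter at most 2^{-n}. Let the shrinking wedge W := ⋁ˢ_{n∈ℕ}(Xₙ, xₙ) be the metric space obtained from the disjoint union of the Xₙ by identifying all basepoints xₙ to a single point w, with metric d(y,z) = dₙ(y,z) if y,z both lie in Xₙ, and d(y,z) = dₙ(y,xₙ) + dₘ(z,xₘ) if y ∈ Xₙ∖{xₙ} and z ∈ Xₘ∖{xₘ} with m ≠ n. Then the strong abelianization ĥ(W, w) is isomorphic as a group to the product ∏_{n∈ℕ} ĥ(Xₙ, xₙ). -/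
open CategoryTheory
open scoped Cardinal

attribute [local instance] Path.Homotopic.setoid

/-- The loop set of a subgroup `G` of `π₁(Y, y)`: the set of loops at `y` (elements of the
loop space `Path y y`, carrying the compact-open/uniform convergence topology) whose
path-homotopy class lies in `G`. -/
def loopSet {Y : Type u} [TopologicalSpace Y] {y : Y} (G : Subgroup (FundamentalGroup Y y)) :
    Set (Path y y) :=
  {l | pathClass l ∈ G}

/-- The smallest closed subgroup of `π₁(Y, y)` containing the commutator subgroup,
namely the intersection of all subgroups that contain the commutator subgroup and
whose loop set is closed in the loop space. -/
noncomputable def strongCommutator (Y : Type u) [TopologicalSpace Y] (y : Y) :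
    Subgroup (FundamentalGroup Y y) :=
  ⨅ (H : Subgroup (FundamentalGroup Y y))
    (_ : commutator (FundamentalGroup Y y) ≤ H ∧ IsClosed (loopSet H)), H

theorem commutator_le_strongCommutator (Y : Type u) [TopologicalSpace Y] (y : Y) :
    commutator (FundamentalGroup Y y) ≤ strongCommutator Y y :=
  le_iInf fun _ => le_iInf fun h => h.1

open scoped commutatorElement in
instance strongCommutator_normal (Y : Type u) [TopologicalSpace Y] (y : Y) :
    (strongCommutator Y y).Normal := by
  constructor
  intro g hg a
  have h1 : ⁅a, g⁆ ∈ strongCommutator Y y := by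
    apply commutator_le_strongCommutator Y y
    rw [commutator_def]
    exact Subgroup.commutator_mem_commutator (Subgroup.mem_top a) (Subgroup.mem_top g)
  have h2 : a * g * a⁻¹ = ⁅a, g⁆ * g := by group
  rw [h2]; exact Subgroup.mul_mem _ h1 hg

/-- The strong abelianization `ĥ(Y, y)`: the quotient of `π₁(Y, y)` by the smallest
closed subgroup containing the commutator subgroup. -/
noncomputable abbrev StrongAb (Y : Type u) [TopologicalSpace Y] (y : Y) : Type u :=
  FundamentalGroup Y y ⧸ strongCommutator Y y

/-!
The retractions `W → X n` induce a homomorphism `π₁(W, w) → ∏ ĥ(X n, x n)`. It kills the strong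
commutator, since preimages of closed subgroups containing the commutator subgroup are again
such. It is surjective: because the factors shrink, loops `ℓ n` in all the factors concatenate
into one loop of `W`, traversing `ℓ n` on `[1 - 2⁻ⁿ, 1 - 2⁻⁽ⁿ⁺¹⁾]`.

For the kernel, take a loop `ℓ` whose retractions all lie in the strong commutators. Given `ε`,
choose `M` with `2⁻ᴹ < ε`. By uniform continuity `ℓ` has only finitely many excursions leaving the
`ε`-ball around `w`, each inside one of the first `M` factors; cutting them out one by one shows
that, modulo commutators, `ℓ` is the product of its retractions to the first `M` factors and an
`ε`-small loop. Hence `ℓ` is congruent modulo the strong commutator of `W` to loops converging to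
the constant loop, and it lies in that closed subgroup.
-/

open unitInterval Topology Filter

section FundamentalGroup

variable {Y Z : Type*} [TopologicalSpace Y] [TopologicalSpace Z] {y : Y} {z : Z}

theorem pathClass_trans_s18 (p q : Path y y) : pathClass (p.trans q) = pathClass q * pathClass p :=
  rfl

theorem pathClass_refl : pathClass (Path.refl y) = 1 :=
  rfl

theorem pathClass_symm_s18 (p : Path y y) : pathClass p.symm = (pathClass p)⁻¹ :=
  rfl

theorem pathClass_surjective_s18 : Function.Surjective (pathClass : Path y y → _) :=
  fun g => Quotient.exists_rep (FundamentalGroup.toPath g)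

theorem pathClass_cast_eq_of_homotopic {u v : Y} {p q : Path u v} (h : p.Homotopic q)
    (hu : y = u) (hv : y = v) : pathClass (p.cast hu hv) = pathClass (q.cast hu hv) := by
  subst hu hv
  exact Quotient.sound h

theorem pathClass_reparam (p : Path y y) (f : I → I) (hf : Continuous f) (h₀ : f 0 = 0)
    (h₁ : f 1 = 1) : pathClass (p.reparam f hf h₀ h₁) = pathClass p :=
  (Quotient.sound (Nonempty.intro (Path.Homotopy.reparam p f hf h₀ h₁))).symm

def loopMap (f : C(Y, Z)) (h : f y = z) (l : Path y y) : Path z z :=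
  (l.map f.continuous).cast h.symm h.symm

@[simp]
theorem loopMap_apply (f : C(Y, Z)) (h : f y = z) (l : Path y y) (t : I) :
    loopMap f h l t = f (l t) :=
  rfl

theorem pathClass_loopMap (f : C(Y, Z)) (h : f y = z) (l : Path y y) :
    pathClass (loopMap f h l) = FundamentalGroup.mapOfEq f h (pathClass l) :=
  (FundamentalGroup.mapOfEq_apply f h (pathClass l)).symm

theorem continuous_loopMap (f : C(Y, Z)) (h : f y = z) : Continuous (loopMap f h) := by
  refine continuous_induced_rng.2 ?_
  have : ((↑) : Path z z → C(I, Z)) ∘ loopMap f h = f.comp ∘ ((↑) : Path y y → C(I, Y)) := rfl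
  rw [this]
  exact (ContinuousMap.continuous_postcomp f).comp continuous_induced_dom

variable (y) in
/-- The image of `π₁(s, y)` in `π₁(Y, y)`. -/
def loopClassesIn (s : Set Y) (hy : y ∈ s) : Subgroup (FundamentalGroup Y y) where
  carrier := {g | ∃ l : Path y y, (∀ t, l t ∈ s) ∧ pathClass l = g}
  one_mem' := ⟨Path.refl y, fun _ => hy, rfl⟩
  mul_mem' := by
    rintro _ _ ⟨p, hp, rfl⟩ ⟨q, hq, rfl⟩
    refine ⟨q.trans p, fun t => ?_, rfl⟩
    rw [Path.trans_apply]
    split_ifs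
    exacts [hq _, hp _]
  inv_mem' := by
    rintro _ ⟨p, hp, rfl⟩
    exact ⟨p.symm, fun t => hp _, rfl⟩

end FundamentalGroup

section StrongCommutator

variable {Y Z : Type*} [TopologicalSpace Y] [TopologicalSpace Z] {y : Y} {z : Z}

theorem strongCommutator_le {H : Subgroup (FundamentalGroup Y y)}
    (hcomm : commutator (FundamentalGroup Y y) ≤ H) (hH : IsClosed (loopSet H)) :
    strongCommutator Y y ≤ H :=
  iInf_le_of_le H (iInf_le _ ⟨hcomm, hH⟩)

theorem isClosed_loopSet_strongCommutator : IsClosed (loopSet (strongCommutator Y y)) := by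
  have : loopSet (strongCommutator Y y) = ⋂ (H : Subgroup (FundamentalGroup Y y))
      (_ : commutator (FundamentalGroup Y y) ≤ H ∧ IsClosed (loopSet H)), loopSet H := by
    ext l
    simp [loopSet, strongCommutator, Subgroup.mem_iInf]
  rw [this]
  exact isClosed_iInter fun H => isClosed_iInter fun hH => hH.2

theorem loopSet_comap_mapOfEq (f : C(Y, Z)) (h : f y = z) (H : Subgroup (FundamentalGroup Z z)) :
    loopSet (H.comap (FundamentalGroup.mapOfEq f h)) = loopMap f h ⁻¹' loopSet H := by
  ext l
  simp [loopSet, pathClass_loopMap]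

theorem strongCommutator_le_comap_mapOfEq (f : C(Y, Z)) (h : f y = z) :
    strongCommutator Y y ≤ (strongCommutator Z z).comap (FundamentalGroup.mapOfEq f h) := by
  refine strongCommutator_le ?_ ?_
  · rw [← Subgroup.map_le_iff_le_comap, commutator_def, Subgroup.map_commutator]
    exact (Subgroup.commutator_mono le_top le_top).trans (commutator_le_strongCommutator Z z)
  · rw [loopSet_comap_mapOfEq]
    exact isClosed_loopSet_strongCommutator.preimage (continuous_loopMap f h)

end StrongCommutator

section SmallLoops

variable {Y : Type*} [MetricSpace Y] {y : Y}

theorem tendsto_refl_of_dist_lt {c : ℕ → Path y y} {u : ℕ → ℝ}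
    (hu : Tendsto u atTop (𝓝 0)) (hc : ∀ j t, dist (c j t) y < u j) :
    Tendsto c atTop (𝓝 (Path.refl y)) := by
  rw [nhds_induced, tendsto_comap_iff, tendsto_iff_dist_tendsto_zero]
  refine squeeze_zero (fun _ => dist_nonneg) (fun j => ?_) hu
  exact (ContinuousMap.dist_le (dist_nonneg.trans_lt (hc j 0)).le).2 fun t => (hc j t).le

theorem mem_of_forall_exists_small_loop {H : Subgroup (FundamentalGroup Y y)}
    (hH : IsClosed (loopSet H)) {g : FundamentalGroup Y y}
    (h : ∀ ε > 0, ∃ c : Path y y, (∀ t, dist (c t) y < ε) ∧ pathClass c * g⁻¹ ∈ H) : g ∈ H := by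
  obtain ⟨l, rfl⟩ := pathClass_surjective_s18 g
  choose c hc hcH using fun j : ℕ => h (1 / (j + 1)) Nat.one_div_pos_of_nat
  have hlim := tendsto_refl_of_dist_lt tendsto_one_div_add_atTop_nhds_zero_nat hc
  have hmem : l.symm.trans (Path.refl y) ∈ loopSet H :=
    hH.mem_of_tendsto ((Path.continuous_trans.tendsto _).comp (tendsto_const_nhds.prodMk_nhds hlim))
      (Eventually.of_forall hcH)
  simpa [loopSet, pathClass_trans_s18, pathClass_refl, pathClass_symm_s18] using hmem

end SmallLoops

namespace Path

variable {Y : Type*} [TopologicalSpace Y] {y : Y} {a b : I}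

def subloop (γ : Path y y) (a b : I) (ha : γ a = y) (hb : γ b = y) : Path y y :=
  (γ.subpath a b).cast ha.symm hb.symm

theorem range_subloop (γ : Path y y) (ha : γ a = y) (hb : γ b = y) :
    Set.range (γ.subloop a b ha hb) = γ '' Set.uIcc a b :=
  range_subpath γ a b

theorem subloop_congr {γ γ' : Path y y} (h : Set.EqOn γ γ' (Set.uIcc a b)) (ha : γ a = y)
    (hb : γ b = y) (ha' : γ' a = y) (hb' : γ' b = y) :
    γ.subloop a b ha hb = γ'.subloop a b ha' hb' := by
  ext s
  exact h (range_subpathAux a b ▸ Set.mem_range_self s)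

theorem subloop_zero_one (γ : Path y y) : γ.subloop 0 1 γ.source γ.target = γ := by
  ext
  simp [subloop]

theorem pathClass_subloop_mul {c : I} (γ : Path y y) (ha : γ a = y) (hb : γ b = y)
    (hc : γ c = y) :
    pathClass (γ.subloop b c hb hc) * pathClass (γ.subloop a b ha hb) =
      pathClass (γ.subloop a c ha hc) := by
  rw [← pathClass_trans_s18]
  exact pathClass_cast_eq_of_homotopic ⟨Homotopy.subpathTransSubpath γ a b c⟩ ha.symm hc.symm

theorem pathClass_eq_subloop_mul (γ : Path y y) (ha : γ a = y) (hb : γ b = y) :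
    pathClass γ = pathClass (γ.subloop b 1 hb γ.target) * pathClass (γ.subloop a b ha hb) *
      pathClass (γ.subloop 0 a γ.source ha) := by
  rw [pathClass_subloop_mul, pathClass_subloop_mul, subloop_zero_one]

theorem apply_eq_of_mem_Icc_of_notMem_Ioo (γ : Path y y) (ha : γ a = y) (hb : γ b = y) {t : I}
    (ht : t ∈ Set.Icc a b) (ht' : t ∉ Set.Ioo a b) : γ t = y := by
  rcases ht.1.eq_or_lt with rfl | hat
  · exact ha
  rcases ht.2.eq_or_lt with rfl | htb
  · exact hb
  exact absurd ⟨hat, htb⟩ ht'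

noncomputable def cut (γ : Path y y) (a b : I) (ha : γ a = y) (hb : γ b = y) : Path y y where
  toFun t := if t ∈ Set.Ioo a b then y else γ t
  continuous_toFun := by
    refine continuous_const.if (fun t ht => ?_) γ.continuous
    rw [Set.ofPred_mem_eq, frontier, isOpen_Ioo.interior_eq] at ht
    exact (γ.apply_eq_of_mem_Icc_of_notMem_Ioo ha hb
      (closure_minimal Set.Ioo_subset_Icc_self isClosed_Icc ht.1) ht.2).symm
  source' := by simp
  target' := by simp

theorem cut_apply_of_mem (γ : Path y y) (ha : γ a = y) (hb : γ b = y) {t : I}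
    (ht : t ∈ Set.Icc a b) : γ.cut a b ha hb t = y := by
  simp only [cut, coe_mk_mk]
  split_ifs with h
  exacts [rfl, γ.apply_eq_of_mem_Icc_of_notMem_Ioo ha hb ht h]

theorem cut_apply_of_notMem (γ : Path y y) (ha : γ a = y) (hb : γ b = y) {t : I}
    (ht : t ∉ Set.Ioo a b) : γ.cut a b ha hb t = γ t := by
  simp only [cut, coe_mk_mk, if_neg ht]

theorem map_pathClass_cut_mul {A : Type*} [CommGroup A] (χ : FundamentalGroup Y y →* A)
    (γ : Path y y) (hab : a ≤ b) (ha : γ a = y) (hb : γ b = y) :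
    χ (pathClass (γ.cut a b ha hb)) * χ (pathClass (γ.subloop a b ha hb)) = χ (pathClass γ) := by
  have ha' := γ.cut_apply_of_mem ha hb ⟨le_rfl, hab⟩
  have hb' := γ.cut_apply_of_mem ha hb ⟨hab, le_rfl⟩
  have hleft : (γ.cut a b ha hb).subloop 0 a (Path.source _) ha' = γ.subloop 0 a γ.source ha := by
    refine subloop_congr (fun t ht => γ.cut_apply_of_notMem ha hb fun h => ?_) _ _ _ _
    rw [Set.uIcc_of_le nonneg'] at ht
    exact not_le_of_gt h.1 ht.2
  have hright : (γ.cut a b ha hb).subloop b 1 hb' (Path.target _) = γ.subloop b 1 hb γ.target := by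
    refine subloop_congr (fun t ht => γ.cut_apply_of_notMem ha hb fun h => ?_) _ _ _ _
    rw [Set.uIcc_of_le le_one'] at ht
    exact not_le_of_gt h.2 ht.1
  have hmid : (γ.cut a b ha hb).subloop a b ha' hb' = (Path.refl y).subloop a b rfl rfl := by
    refine subloop_congr (fun t ht => γ.cut_apply_of_mem ha hb ?_) _ _ _ _
    rwa [Set.uIcc_of_le hab] at ht
  have hrefl : (Path.refl y).subloop a b rfl rfl = Path.refl y := by
    ext
    rfl
  rw [γ.pathClass_eq_subloop_mul ha hb, (γ.cut a b ha hb).pathClass_eq_subloop_mul ha' hb', hleft,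
    hright, hmid, hrefl, pathClass_refl, mul_one]
  simp only [map_mul]
  exact mul_right_comm _ _ _

theorem exists_excursion [T1Space Y] (γ : Path y y) {t₀ : I} (h : γ t₀ ≠ y) :
    ∃ p q : I, p < t₀ ∧ t₀ < q ∧ γ p = y ∧ γ q = y ∧ ∀ s ∈ Set.Ioo p q, γ s ≠ y := by
  have hY : IsClosed (γ ⁻¹' {y}) := isClosed_singleton.preimage γ.continuous
  have hp : sSup (γ ⁻¹' {y} ∩ Set.Iic t₀) ∈ γ ⁻¹' {y} ∩ Set.Iic t₀ :=
    (hY.inter isClosed_Iic).sSup_mem ⟨0, γ.source, nonneg'⟩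
  have hq : sInf (γ ⁻¹' {y} ∩ Set.Ici t₀) ∈ γ ⁻¹' {y} ∩ Set.Ici t₀ :=
    (hY.inter isClosed_Ici).sInf_mem ⟨1, γ.target, le_one'⟩
  refine ⟨_, _, hp.2.lt_of_ne fun hpt => h (hpt ▸ hp.1), hq.2.lt_of_ne' fun hqt => h (hqt ▸ hq.1),
    hp.1, hq.1, fun s hs hsy => ?_⟩
  rcases le_total s t₀ with hst | hst
  · exact (le_sSup (s := γ ⁻¹' {y} ∩ Set.Iic t₀) ⟨hsy, hst⟩).not_gt hs.1
  · exact (sInf_le (s := γ ⁻¹' {y} ∩ Set.Ici t₀) ⟨hsy, hst⟩).not_gt hs.2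

end Path

/-- Maps `[1 - 2⁻ⁿ, 1 - 2⁻⁽ⁿ⁺¹⁾]` affinely onto `I`, and is clamped outside this interval. -/
noncomputable def blockParam (n : ℕ) (t : I) : I :=
  Set.projIcc 0 1 zero_le_one (2 ^ (n + 1) * ((t : ℝ) - 1) + 2)

theorem continuous_blockParam (n : ℕ) : Continuous (blockParam n) :=
  continuous_projIcc.comp (by fun_prop)

theorem blockParam_zero (n : ℕ) : blockParam n 0 = 0 := by
  refine Set.projIcc_of_le_left _ ?_
  have : (2 : ℝ) ≤ 2 ^ (n + 1) := le_self_pow₀ (by norm_num) (by omega)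
  simp only [Set.Icc.coe_zero]
  linarith

theorem blockParam_one (n : ℕ) : blockParam n 1 = 1 :=
  Set.projIcc_of_right_le _ (by simp)

theorem blockParam_eq_one_or_eq_zero {n m : ℕ} (hnm : n < m) (t : I) :
    blockParam n t = 1 ∨ blockParam m t = 0 := by
  by_cases h : 2 ^ (m + 1) * ((t : ℝ) - 1) + 2 ≤ 0
  · exact Or.inr (Set.projIcc_of_le_left _ h)
  · refine Or.inl (Set.projIcc_of_right_le _ ?_)
    have h2 : (2 : ℝ) ^ (n + 1) * 2 ≤ 2 ^ (m + 1) := by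
      rw [← pow_succ]
      exact pow_le_pow_right₀ (by norm_num) (by omega)
    have ht : (t : ℝ) - 1 ≤ 0 := by linarith [t.2.2]
    nlinarith [mul_nonpos_of_nonneg_of_nonpos (sub_nonneg.2 h2) ht]

structure IsShrinkingWedge {X : ℕ → Type*} [∀ n, MetricSpace (X n)] (x : ∀ n, X n)
    {W : Type*} [MetricSpace W] (w : W) (φ : ∀ n, X n → W) : Prop where
  dist_le : ∀ (n : ℕ) (y z : X n), dist y z ≤ 2⁻¹ ^ n
  map_base : ∀ n, φ n (x n) = w
  exists_map_eq : ∀ v : W, ∃ n y, φ n y = v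
  dist_map : ∀ (n : ℕ) (y z : X n), dist (φ n y) (φ n z) = dist y z
  dist_map_of_ne : ∀ n m, n ≠ m → ∀ (y : X n) (z : X m),
    dist (φ n y) (φ m z) = dist y (x n) + dist z (x m)

open Classical in
noncomputable def wedgeCoord {X : ℕ → Type*} (x : ∀ n, X n) {W : Type*} (φ : ∀ n, X n → W)
    (n : ℕ) (v : W) : X n :=
  if h : ∃ y, φ n y = v then h.choose else x n

namespace IsShrinkingWedge

variable {X : ℕ → Type*} [∀ n, MetricSpace (X n)] {x : ∀ n, X n} {W : Type*} [MetricSpace W]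
  {w : W} {φ : ∀ n, X n → W} (hW : IsShrinkingWedge x w φ)
include hW

theorem isometry (n : ℕ) : Isometry (φ n) :=
  Isometry.of_dist_eq (hW.dist_map n)

theorem coord_map_self (n : ℕ) (y : X n) : wedgeCoord x φ n (φ n y) = y := by
  have h : ∃ y', φ n y' = φ n y := ⟨y, rfl⟩
  rw [wedgeCoord, dif_pos h]
  exact (hW.isometry n).injective h.choose_spec

theorem coord_map_of_ne {m n : ℕ} (hmn : m ≠ n) (z : X m) : wedgeCoord x φ n (φ m z) = x n := by
  rw [wedgeCoord]
  split_ifs with h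
  · have h0 := hW.dist_map_of_ne n m hmn.symm h.choose z
    rw [h.choose_spec, dist_self] at h0
    exact dist_le_zero.1 (by linarith [dist_nonneg (x := z) (y := x m)])
  · rfl

theorem coord_base (n : ℕ) : wedgeCoord x φ n w = x n := by
  rw [← hW.map_base n, hW.coord_map_self]

theorem hasSum_dist_coord (u v : W) :
    HasSum (fun n => dist (wedgeCoord x φ n u) (wedgeCoord x φ n v)) (dist u v) := by
  obtain ⟨a, y, rfl⟩ := hW.exists_map_eq u
  obtain ⟨b, z, rfl⟩ := hW.exists_map_eq v
  have hzero : ∀ n ∉ ({a, b} : Finset ℕ),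
      dist (wedgeCoord x φ n (φ a y)) (wedgeCoord x φ n (φ b z)) = 0 := by
    intro n hn
    simp only [Finset.mem_insert, Finset.mem_singleton, not_or] at hn
    rw [hW.coord_map_of_ne (Ne.symm hn.1), hW.coord_map_of_ne (Ne.symm hn.2), dist_self]
  convert hasSum_sum_of_ne_finset_zero (L := SummationFilter.unconditional ℕ) hzero using 1
  rcases eq_or_ne a b with rfl | hab
  · simp [hW.coord_map_self, hW.dist_map]
  · rw [Finset.sum_pair hab, hW.coord_map_self, hW.coord_map_self, hW.coord_map_of_ne hab,
      hW.coord_map_of_ne hab.symm, hW.dist_map_of_ne a b hab, dist_comm (x b)]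

theorem dist_coord_le (n : ℕ) (u v : W) :
    dist (wedgeCoord x φ n u) (wedgeCoord x φ n v) ≤ dist u v :=
  le_hasSum (hW.hasSum_dist_coord u v) n fun _ _ => dist_nonneg

theorem eq_of_forall_coord_eq {u v : W} (h : ∀ n, wedgeCoord x φ n u = wedgeCoord x φ n v) :
    u = v :=
  dist_eq_zero.1 <| (hW.hasSum_dist_coord u v).unique (by simp [h])

theorem continuous_coord (n : ℕ) : Continuous (wedgeCoord x φ n) :=
  LipschitzWith.continuous (K := 1) <| LipschitzWith.of_dist_le_mul fun u v => by
    simpa using hW.dist_coord_le n u v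

/-- The series of coordinate distances converges uniformly since the `n`-th factor has diameter
at most `2⁻ⁿ`. -/
theorem continuous_of_forall_continuous_coord {T : Type*} [TopologicalSpace T] {f : T → W}
    (hf : ∀ n, Continuous fun t => wedgeCoord x φ n (f t)) : Continuous f := by
  refine continuous_iff_continuousAt.2 fun t₀ => tendsto_iff_dist_tendsto_zero.2 ?_
  have hcont : Continuous fun t => ∑' n, dist (wedgeCoord x φ n (f t)) (wedgeCoord x φ n (f t₀)) :=
    continuous_tsum (fun n => (hf n).dist continuous_const)
      (summable_geometric_of_lt_one (by norm_num) (by norm_num : (2 : ℝ)⁻¹ < 1))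
      fun n t => by rw [Real.norm_of_nonneg dist_nonneg]; exact hW.dist_le n _ _
  simpa [(hW.hasSum_dist_coord _ _).tsum_eq] using hcont.tendsto t₀

theorem exists_forall_coord_eq (y : ∀ n, X n) (hy : ∀ n m, n ≠ m → y n = x n ∨ y m = x m) :
    ∃ v, ∀ n, wedgeCoord x φ n v = y n := by
  by_cases h : ∃ m, y m ≠ x m
  · obtain ⟨m, hm⟩ := h
    refine ⟨φ m (y m), fun n => ?_⟩
    rcases eq_or_ne m n with rfl | hmn
    · exact hW.coord_map_self _ _
    · rw [hW.coord_map_of_ne hmn]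
      exact ((hy n m hmn.symm).resolve_right hm).symm
  · push Not at h
    exact ⟨w, fun n => (hW.coord_base n).trans (h n).symm⟩

theorem coord_eq_or_coord_eq (v : W) {n m : ℕ} (hnm : n ≠ m) :
    wedgeCoord x φ n v = x n ∨ wedgeCoord x φ m v = x m := by
  obtain ⟨k, z, rfl⟩ := hW.exists_map_eq v
  rcases eq_or_ne k n with rfl | hkn
  · exact Or.inr (hW.coord_map_of_ne hnm z)
  · exact Or.inl (hW.coord_map_of_ne hkn z)

theorem mem_range_iff {v : W} {m : ℕ} :
    v ∈ Set.range (φ m) ↔ ∀ n ≠ m, wedgeCoord x φ n v = x n := by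
  constructor
  · rintro ⟨z, rfl⟩ n hnm
    exact hW.coord_map_of_ne hnm.symm z
  · intro h
    obtain ⟨k, z, rfl⟩ := hW.exists_map_eq v
    rcases eq_or_ne k m with rfl | hkm
    · exact ⟨z, rfl⟩
    · refine ⟨x m, ?_⟩
      rw [hW.map_base, ← hW.coord_map_self k z, h k hkm, hW.map_base]

theorem dist_base_le_of_mem_range {v : W} {m : ℕ} (hv : v ∈ Set.range (φ m)) :
    dist v w ≤ 2⁻¹ ^ m := by
  obtain ⟨z, rfl⟩ := hv
  rw [← hW.map_base m, hW.dist_map]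
  exact hW.dist_le m z (x m)

theorem dist_map_coord_base_le (m : ℕ) (v : W) : dist (φ m (wedgeCoord x φ m v)) w ≤ dist v w := by
  have h := hW.dist_coord_le m v w
  rwa [hW.coord_base, ← hW.dist_map m, hW.map_base] at h

theorem subset_range_of_isPreconnected {S : Set W} (hS : IsPreconnected S) (hwS : w ∉ S) {v : W}
    (hvS : v ∈ S) {m : ℕ} (hvm : v ∈ Set.range (φ m)) : S ⊆ Set.range (φ m) := by
  have hne : ∀ s ∈ S, ∃ n, wedgeCoord x φ n s ≠ x n := fun s hs => by
    by_contra! h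
    exact hwS (hW.eq_of_forall_coord_eq (fun n => (h n).trans (hW.coord_base n).symm) ▸ hs)
  have hopen : ∀ n, IsOpen {s : W | wedgeCoord x φ n s ≠ x n} := fun n =>
    isOpen_ne_fun (hW.continuous_coord n) continuous_const
  have hvm' : wedgeCoord x φ m v ≠ x m := fun h => by
    obtain ⟨n, hn⟩ := hne v hvS
    rcases eq_or_ne n m with rfl | hnm
    exacts [hn h, hn (hW.mem_range_iff.1 hvm n hnm)]
  have hSm : S ⊆ {s | wedgeCoord x φ m s ≠ x m} := by
    refine hS.subset_left_of_subset_union (hopen m)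
      (isOpen_iUnion fun n => isOpen_iUnion fun (_ : n ≠ m) => hopen n) ?_ ?_ ⟨v, hvS, hvm'⟩
    · refine Set.disjoint_left.2 fun s hsm hs => ?_
      obtain ⟨n, hnm, hsn⟩ := Set.mem_iUnion₂.1 hs
      exact (hW.coord_eq_or_coord_eq s hnm).elim hsn hsm
    · intro s hs
      obtain ⟨n, hn⟩ := hne s hs
      rcases eq_or_ne n m with rfl | hnm
      exacts [Or.inl hn, Or.inr (Set.mem_iUnion₂.2 ⟨n, hnm, hn⟩)]
  exact fun s hs => hW.mem_range_iff.2 fun n hnm =>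
    (hW.coord_eq_or_coord_eq s hnm).resolve_right (hSm hs)

noncomputable def retraction (n : ℕ) : C(W, X n) :=
  ⟨wedgeCoord x φ n, hW.continuous_coord n⟩

def inclusion (n : ℕ) : C(X n, W) :=
  ⟨φ n, (hW.isometry n).continuous⟩

theorem retraction_base (n : ℕ) : hW.retraction n w = x n :=
  hW.coord_base n

theorem inclusion_base (n : ℕ) : hW.inclusion n (x n) = w :=
  hW.map_base n

noncomputable def projHom (m : ℕ) : FundamentalGroup W w →* FundamentalGroup W w :=
  (FundamentalGroup.mapOfEq (hW.inclusion m) (hW.inclusion_base m)).comp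
    (FundamentalGroup.mapOfEq (hW.retraction m) (hW.retraction_base m))

theorem projHom_pathClass (m : ℕ) (l : Path w w) :
    hW.projHom m (pathClass l) = pathClass (loopMap (hW.inclusion m) (hW.inclusion_base m)
      (loopMap (hW.retraction m) (hW.retraction_base m) l)) := by
  rw [pathClass_loopMap, pathClass_loopMap]
  rfl

theorem projHom_pathClass_of_range_subset {m : ℕ} {E : Path w w}
    (hE : Set.range E ⊆ Set.range (φ m)) : hW.projHom m (pathClass E) = pathClass E := by
  rw [projHom_pathClass]
  congr 1
  ext t
  obtain ⟨z, hz⟩ := hE ⟨t, rfl⟩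
  simp [retraction, inclusion, ← hz, hW.coord_map_self]

theorem projHom_pathClass_of_range_subset_of_ne {m k : ℕ} {E : Path w w}
    (hE : Set.range E ⊆ Set.range (φ m)) (hkm : k ≠ m) : hW.projHom k (pathClass E) = 1 := by
  rw [projHom_pathClass, ← pathClass_refl]
  congr 1
  ext t
  obtain ⟨z, hz⟩ := hE ⟨t, rfl⟩
  simp [retraction, inclusion, ← hz, hW.coord_map_of_ne hkm.symm, hW.map_base]

theorem projHom_mem_loopClassesIn_ball {ε : ℝ} (hε : 0 < ε) (m : ℕ) {g : FundamentalGroup W w}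
    (hg : g ∈ loopClassesIn w (Metric.ball w ε) (Metric.mem_ball_self hε)) :
    hW.projHom m g ∈ loopClassesIn w (Metric.ball w ε) (Metric.mem_ball_self hε) := by
  obtain ⟨l, hl, rfl⟩ := hg
  exact ⟨_, fun t => (hW.dist_map_coord_base_le m (l t)).trans_lt (hl t),
    (hW.projHom_pathClass m l).symm⟩

section Cutting

variable {A : Type*} [CommGroup A] {ψ : FundamentalGroup W w →* A} {ε : ℝ} {M : ℕ}

theorem map_pathClass_subloop_eq_one (hM : (2 : ℝ)⁻¹ ^ M < ε)
    (hψ : ∀ m < M, ∀ E : Path w w, Set.range E ⊆ Set.range (φ m) → ψ (pathClass E) = 1)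
    (ℓ : Path w w) {p q t₀ : I} (hp : ℓ p = w) (hq : ℓ q = w)
    (hne : ∀ s ∈ Set.Ioo p q, ℓ s ≠ w) (ht₀ : t₀ ∈ Set.Ioo p q) (hbig : ε ≤ dist (ℓ t₀) w) :
    ψ (pathClass (ℓ.subloop p q hp hq)) = 1 := by
  obtain ⟨m, z, hz⟩ := hW.exists_map_eq (ℓ t₀)
  have hm : m < M := (pow_lt_pow_iff_right_of_lt_one₀ (by norm_num) (by norm_num)).1
    (hM.trans_le (hbig.trans (hW.dist_base_le_of_mem_range ⟨z, hz⟩)))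
  refine hψ m hm _ ?_
  have hIoo : ℓ '' Set.Ioo p q ⊆ Set.range (φ m) :=
    hW.subset_range_of_isPreconnected (isPreconnected_Ioo.image _ ℓ.continuous.continuousOn)
      (fun ⟨s, hs, hsw⟩ => hne s hs hsw) (Set.mem_image_of_mem ℓ ht₀) ⟨z, hz⟩
  rw [Path.range_subloop, Set.uIcc_of_le (ht₀.1.trans ht₀.2).le]
  rintro _ ⟨s, hs, rfl⟩
  rcases hs.1.eq_or_lt with rfl | hps
  · exact ⟨x m, (hW.map_base m).trans hp.symm⟩
  rcases hs.2.eq_or_lt with rfl | hsq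
  · exact ⟨x m, (hW.map_base m).trans hq.symm⟩
  exact hIoo ⟨s, ⟨hps, hsq⟩, rfl⟩

/-- The excursion of `ℓ₀` through its first point outside the `ε`-ball lies in one of the first
`M` factors, so cutting it out does not change the image under `ψ`; as `ℓ` varies by less than `ε`
over distances `δ`, the excursion has length at least `δ`. -/
theorem exists_cut (hε : 0 < ε) (hM : (2 : ℝ)⁻¹ ^ M < ε)
    (hψ : ∀ m < M, ∀ E : Path w w, Set.range E ⊆ Set.range (φ m) → ψ (pathClass E) = 1)
    {ℓ ℓ₀ : Path w w} {δ : ℝ} (hδ : ∀ s t : I, dist s t < δ → dist (ℓ s) (ℓ t) < ε) {a : I}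
    (hagree : ∀ t, a ≤ t → ℓ₀ t = ℓ t) (hsmall : ∀ t < a, dist (ℓ₀ t) w < ε)
    (hbig : ∃ t, ε ≤ dist (ℓ₀ t) w) :
    ∃ (ℓ₁ : Path w w) (b : I), ψ (pathClass ℓ₁) = ψ (pathClass ℓ₀) ∧ (a : ℝ) + δ ≤ b ∧
      (∀ t, b ≤ t → ℓ₁ t = ℓ t) ∧ ∀ t < b, dist (ℓ₁ t) w < ε := by
  have hB : IsClosed {t : I | ε ≤ dist (ℓ₀ t) w} :=
    isClosed_le continuous_const (ℓ₀.continuous.dist continuous_const)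
  set t₀ := sInf {t : I | ε ≤ dist (ℓ₀ t) w}
  have ht₀ : ε ≤ dist (ℓ₀ t₀) w := hB.sInf_mem hbig
  have hat₀ : a ≤ t₀ := not_lt.1 fun h => (hsmall t₀ h).not_ge ht₀
  obtain ⟨p, q, hpt, htq, hp, hq, hne⟩ := ℓ₀.exists_excursion (t₀ := t₀) fun h => by
    rw [h, dist_self] at ht₀
    exact ht₀.not_gt hε
  refine ⟨ℓ₀.cut p q hp hq, q, ?_, ?_, fun t hqt => ?_, fun t htq' => ?_⟩
  · rw [← ℓ₀.map_pathClass_cut_mul ψ (hpt.trans htq).le hp hq,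
      hW.map_pathClass_subloop_eq_one hM hψ ℓ₀ hp hq hne ⟨hpt, htq⟩ ht₀, mul_one]
  · by_contra! h
    have hlt : dist t₀ q < δ := by
      rw [Subtype.dist_eq, Real.dist_eq, abs_sub_lt_iff]
      have : (a : ℝ) ≤ t₀ := hat₀
      have : (t₀ : ℝ) < q := htq
      constructor <;> linarith
    have := hδ t₀ q hlt
    rw [← hagree t₀ hat₀, ← hagree q (hat₀.trans htq.le), hq] at this
    exact this.not_ge ht₀
  · rw [ℓ₀.cut_apply_of_notMem hp hq fun h => h.2.not_ge hqt,
      hagree t (hat₀.trans (htq.le.trans hqt))]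
  · by_cases hpt' : p ≤ t
    · rw [ℓ₀.cut_apply_of_mem hp hq ⟨hpt', htq'.le⟩, dist_self]
      exact hε
    · rw [ℓ₀.cut_apply_of_notMem hp hq fun h => hpt' h.1.le]
      exact not_le.1 fun h =>
        hpt' (hpt.trans_le (sInf_le (s := {t : I | ε ≤ dist (ℓ₀ t) w}) h)).le

theorem map_mem_map_loopClassesIn_ball (hε : 0 < ε) (hM : (2 : ℝ)⁻¹ ^ M < ε)
    (hψ : ∀ m < M, ∀ E : Path w w, Set.range E ⊆ Set.range (φ m) → ψ (pathClass E) = 1)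
    (g : FundamentalGroup W w) :
    ψ g ∈ (loopClassesIn w (Metric.ball w ε) (Metric.mem_ball_self hε)).map ψ := by
  obtain ⟨ℓ, rfl⟩ := pathClass_surjective_s18 g
  obtain ⟨δ, hδ, hℓ⟩ := Metric.uniformContinuous_iff.1
    (CompactSpace.uniformContinuous_of_continuous ℓ.continuous) ε hε
  obtain ⟨N, hN⟩ := exists_nat_gt (1 / δ)
  -- `n` bounds the number of cuts still needed: each one moves `a` forward by at least `δ`.
  suffices key : ∀ (n : ℕ) (ℓ₀ : Path w w) (a : I), 1 < (a : ℝ) + n * δ →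
      (∀ t, a ≤ t → ℓ₀ t = ℓ t) → (∀ t < a, dist (ℓ₀ t) w < ε) →
      ψ (pathClass ℓ₀) ∈ (loopClassesIn w (Metric.ball w ε) (Metric.mem_ball_self hε)).map ψ from
    key N ℓ 0 (by simpa using (div_lt_iff₀ hδ).1 hN) (fun _ _ => rfl)
      fun t ht => absurd ht (not_lt.2 nonneg')
  intro n
  induction n with
  | zero =>
    intro ℓ₀ a ha
    simp only [CharP.cast_eq_zero, zero_mul, add_zero] at ha
    exact absurd ha (not_lt.2 le_one')
  | succ n ih =>
    intro ℓ₀ a ha hagree hsmall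
    by_cases hbig : ∃ t, ε ≤ dist (ℓ₀ t) w
    · obtain ⟨ℓ₁, b, hψ₁, hab, hagree₁, hsmall₁⟩ :=
        hW.exists_cut hε hM hψ (fun s t => @hℓ s t) hagree hsmall hbig
      rw [← hψ₁]
      exact ih ℓ₁ b (by push_cast at ha; linarith) hagree₁ hsmall₁
    · push Not at hbig
      exact ⟨_, ⟨ℓ₀, hbig, rfl⟩, rfl⟩

end Cutting

theorem exists_loop_coord_eq (γ : ∀ n, Path (x n) (x n))
    (hγ : ∀ t n m, n < m → γ n t = x n ∨ γ m t = x m) :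
    ∃ ℓ : Path w w, ∀ n t, wedgeCoord x φ n (ℓ t) = γ n t := by
  have hγ' : ∀ t n m, n ≠ m → γ n t = x n ∨ γ m t = x m := fun t n m hnm => by
    rcases lt_or_gt_of_ne hnm with h | h
    exacts [hγ t n m h, (hγ t m n h).symm]
  choose f hf using fun t => hW.exists_forall_coord_eq (fun n => γ n t) (hγ' t)
  refine ⟨⟨⟨f, hW.continuous_of_forall_continuous_coord fun n => ?_⟩, ?_, ?_⟩, fun n t => hf t n⟩
  · simpa only [hf] using (γ n).continuous
  · exact hW.eq_of_forall_coord_eq fun n => by rw [hf, (γ n).source, hW.coord_base]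
  · exact hW.eq_of_forall_coord_eq fun n => by rw [hf, (γ n).target, hW.coord_base]

noncomputable def toStrongAb : FundamentalGroup W w →* ∀ n, StrongAb (X n) (x n) :=
  MonoidHom.pi fun n => (QuotientGroup.mk' _).comp
    (FundamentalGroup.mapOfEq (hW.retraction n) (hW.retraction_base n))

theorem toStrongAb_surjective : Function.Surjective hW.toStrongAb := by
  intro g
  choose l hl using fun n => ((QuotientGroup.mk'_surjective _).comp pathClass_surjective_s18) (g n)
  obtain ⟨ℓ, hℓ⟩ := hW.exists_loop_coord_eq (fun n => (l n).reparam (blockParam n)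
    (continuous_blockParam n) (blockParam_zero n) (blockParam_one n)) fun t n m hnm => by
      rcases blockParam_eq_one_or_eq_zero hnm t with h | h
      · exact Or.inl (by simp [h])
      · exact Or.inr (by simp [h])
  refine ⟨pathClass ℓ, funext fun n => ?_⟩
  have : loopMap (hW.retraction n) (hW.retraction_base n) ℓ = (l n).reparam (blockParam n)
      (continuous_blockParam n) (blockParam_zero n) (blockParam_one n) := by
    ext t
    exact hℓ n t
  simpa [toStrongAb, ← pathClass_loopMap, this, pathClass_reparam] using hl n

theorem mem_strongCommutator {g : FundamentalGroup W w}
    (hg : ∀ n, FundamentalGroup.mapOfEq (hW.retraction n) (hW.retraction_base n) g ∈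
      strongCommutator (X n) (x n)) : g ∈ strongCommutator W w := by
  let χ := (QuotientGroup.mk' ((strongCommutator W w).map Abelianization.of)).comp
    Abelianization.of
  have hχ : χ.ker = strongCommutator W w := by
    rw [← MonoidHom.comap_ker, QuotientGroup.ker_mk', Subgroup.comap_map_eq, Abelianization.ker_of,
      sup_eq_left.2 (commutator_le_strongCommutator W w)]
  have hproj : ∀ m, χ (hW.projHom m g) = 1 := fun m => by
    rw [← MonoidHom.mem_ker, hχ]
    exact strongCommutator_le_comap_mapOfEq (hW.inclusion m) (hW.inclusion_base m) (hg m)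
  refine mem_of_forall_exists_small_loop isClosed_loopSet_strongCommutator fun ε hε => ?_
  obtain ⟨M, hM⟩ := exists_pow_lt_of_lt_one hε (by norm_num : (2 : ℝ)⁻¹ < 1)
  let ψ := χ / ∏ m ∈ Finset.range M, χ.comp (hW.projHom m)
  have hψ : ∀ m < M, ∀ E : Path w w, Set.range E ⊆ Set.range (φ m) → ψ (pathClass E) = 1 := by
    intro m hm E hE
    simp only [ψ, MonoidHom.div_apply, MonoidHom.finsetProd_apply, MonoidHom.comp_apply]
    rw [Finset.prod_eq_single_of_mem m (Finset.mem_range.2 hm) fun k _ hkm => by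
      rw [hW.projHom_pathClass_of_range_subset_of_ne hE hkm, map_one],
      hW.projHom_pathClass_of_range_subset hE, div_self']
  obtain ⟨h, hh, hψh⟩ := hW.map_mem_map_loopClassesIn_ball hε hM hψ g
  have hχg : χ g ∈ (loopClassesIn w (Metric.ball w ε) (Metric.mem_ball_self hε)).map χ := by
    have hψg : ψ g = χ g := by simp [ψ, hproj]
    rw [← hψg, ← hψh]
    simp only [ψ, MonoidHom.div_apply, MonoidHom.finsetProd_apply, MonoidHom.comp_apply]
    exact Subgroup.div_mem _ (Subgroup.mem_map_of_mem χ hh) (Subgroup.prod_mem _ fun m _ =>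
      Subgroup.mem_map_of_mem χ (hW.projHom_mem_loopClassesIn_ball hε m hh))
  obtain ⟨_, ⟨c, hc, rfl⟩, hcg⟩ := hχg
  refine ⟨c, hc, ?_⟩
  rw [← hχ, MonoidHom.mem_ker, map_mul, map_inv, hcg, mul_inv_cancel]

theorem ker_toStrongAb : hW.toStrongAb.ker = strongCommutator W w := by
  refine le_antisymm (fun g hg => hW.mem_strongCommutator fun n => ?_) fun g hg => ?_
  · exact (QuotientGroup.eq_one_iff _).1 (congr_fun (MonoidHom.mem_ker.1 hg) n)
  · exact MonoidHom.mem_ker.2 <| funext fun n =>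
      (QuotientGroup.eq_one_iff _).2 (strongCommutator_le_comap_mapOfEq _ _ hg)

end IsShrinkingWedge

theorem stmt18_general (X : ℕ → Type) [∀ n, MetricSpace (X n)]
    (x : ∀ n, X n) (hdiam : ∀ (n : ℕ) (y z : X n), dist y z ≤ 2⁻¹ ^ n)
    (W : Type) [MetricSpace W] (w : W) (φ : ∀ n, X n → W)
    (hbase : ∀ n, φ n (x n) = w)
    (hsurj : ∀ v : W, ∃ n yy, φ n yy = v)
    (hdist_same : ∀ (n : ℕ) (y z : X n), dist (φ n y) (φ n z) = dist y z)
    (hdist_ne : ∀ (n m : ℕ), n ≠ m → ∀ (y : X n) (z : X m),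
        dist (φ n y) (φ m z) = dist y (x n) + dist z (x m)) :
    Nonempty (StrongAb W w ≃* ∀ n, StrongAb (X n) (x n)) := by
  have hW : IsShrinkingWedge x w φ := ⟨hdiam, hbase, hsurj, hdist_same, hdist_ne⟩
  exact ⟨(QuotientGroup.quotientMulEquivOfEq hW.ker_toStrongAb.symm).trans
    (QuotientGroup.quotientKerEquivOfSurjective _ hW.toStrongAb_surjective)⟩

/-- Let `(Xₙ, dₙ)` be path connected metric spaces with basepoints `xₙ`
and diameter at most `2⁻ⁿ`.  Let `W` (with point `w`) be the shrinking wedge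
`⋁ˢₙ (Xₙ, xₙ)`, characterized by maps `φₙ : Xₙ → W` sending `xₙ` to `w`, jointly
surjective, and realizing the wedge metric: `d(φₙ y, φₙ z) = dₙ(y, z)` and, for `n ≠ m`,
`d(φₙ y, φₘ z) = dₙ(y, xₙ) + dₘ(z, xₘ)`.  Then the strong abelianization `ĥ(W, w)` is
isomorphic as a group to `∏ₙ ĥ(Xₙ, xₙ)`. -/
theorem stmt18 (X : ℕ → Type) [∀ n, MetricSpace (X n)] [∀ n, PathConnectedSpace (X n)]
    (x : ∀ n, X n) (hdiam : ∀ (n : ℕ) (y z : X n), dist y z ≤ 2⁻¹ ^ n)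
    (W : Type) [MetricSpace W] (w : W) (φ : ∀ n, X n → W)
    (hbase : ∀ n, φ n (x n) = w)
    (hsurj : ∀ v : W, ∃ n yy, φ n yy = v)
    (hdist_same : ∀ (n : ℕ) (y z : X n), dist (φ n y) (φ n z) = dist y z)
    (hdist_ne : ∀ (n m : ℕ), n ≠ m → ∀ (y : X n) (z : X m),
        dist (φ n y) (φ m z) = dist y (x n) + dist z (x m)) :
    Nonempty (StrongAb W w ≃* ∀ n, StrongAb (X n) (x n)) :=
  stmt18_general X x hdiam W w φ hbase hsurj hdist_same hdist_ne
end
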